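/- arXiv:2212.08289 — 5 statements merged into one kernel-verified Lean document; each statement's English description precedes it below -/
import Mathlib

section
/- Let μ > 0 and let p : [0,∞) → ℝ^ℕ be a solution of the mean-field ODE system d/dt p_n(t) = 𝓛[p(t)]_n (each t ↦ p_n(t) differentiable), with p_n(t) ≥ 0 for all n and t, and assume the series ∑_{n≥0} n²·p_n(t) converges uniformly on compact subsets of [0,∞). If p(0) ∈ V_μ, then p(t) ∈ V_μ for all t ≥ 0; that is, ∑_{n≥0} p_n(t) = 1 and ∑_{n≥0} n·p_n(t) = μ for every t ≥ 0. -/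
open Filter

/-- The poor-biased generator: `𝓛[p]_0 = p_1 - μ p_0` and, for `n ≥ 1`,
`𝓛[p]_n = (n+1) p_{n+1} + μ p_{n-1} - (n+μ) p_n`. -/
noncomputable def gen (μ : ℝ) (p : ℕ → ℝ) : ℕ → ℝ
  | 0 => p 1 - μ * p 0
  | n + 1 => ((n : ℝ) + 2) * p (n + 2) + μ * p n - (((n : ℝ) + 1) + μ) * p (n + 1)

/-- `V_μ`: probability mass functions on `ℕ` with mean `μ`. -/
def memV (μ : ℝ) (p : ℕ → ℝ) : Prop :=
  (∀ n, 0 ≤ p n) ∧ (∑' n : ℕ, p n = 1) ∧ (∑' n : ℕ, (n : ℝ) * p n = μ)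

/-- The series `∑_n f n t` converges uniformly on compact subsets of `[0, ∞)`. -/
def UnifConvOnCompacts (f : ℕ → ℝ → ℝ) : Prop :=
  ∀ K : Set ℝ, K ⊆ Set.Ici 0 → IsCompact K →
    TendstoUniformlyOn (fun (m : ℕ) (t : ℝ) => ∑ n ∈ Finset.range m, f n t)
      (fun t => ∑' n : ℕ, f n t) atTop K

/-!
Summing the equations over `n ≤ N` telescopes:
`d/dt ∑_{n≤N} p_n = (N+1) p_{N+1} - μ p_N` and
`d/dt ∑_{n≤N} n p_n = N(N+1) p_{N+1} - μ N p_N + μ ∑_{n<N} p_n - ∑_{n≤N} n p_n`.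
Since the terms are nonnegative, the locally uniform convergence of `∑ n² p_n` dominates the
tails of `∑ p_n` and `∑ n p_n` and forces `n² p_n → 0` locally uniformly, which kills the boundary
terms. Passing to the limit in the derivatives, the mass `M₀ = ∑ p_n` has derivative `0` and the
mean `M₁ = ∑ n p_n` satisfies `M₁' = μ M₀ - M₁ = μ - M₁`, so `M₀ ≡ 1` and `M₁ ≡ μ`.
-/

open Set

lemma sum_range_succ_gen (μ : ℝ) (q : ℕ → ℝ) (N : ℕ) :
    ∑ n ∈ Finset.range (N + 1), gen μ q n = (N + 1) * q (N + 1) - μ * q N := by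
  induction N with
  | zero => simp [gen]
  | succ N ih =>
    rw [Finset.sum_range_succ, ih, gen]
    push_cast
    ring

lemma sum_range_succ_mul_gen (μ : ℝ) (q : ℕ → ℝ) (N : ℕ) :
    ∑ n ∈ Finset.range (N + 1), (n : ℝ) * gen μ q n =
      N * (N + 1) * q (N + 1) - μ * (N * q N) + μ * ∑ n ∈ Finset.range N, q n
        - ∑ n ∈ Finset.range (N + 1), (n : ℝ) * q n := by
  induction N with
  | zero => simp [gen]
  | succ N ih =>
    rw [Finset.sum_range_succ, ih, gen, Finset.sum_range_succ q,
      Finset.sum_range_succ (fun n => (n : ℝ) * q n) (N + 1)]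
    push_cast
    ring

lemma norm_sub_mul_le_of_le {a b A B : ℝ} (μ : ℝ) (ha : 0 ≤ a) (hb : 0 ≤ b) (haA : a ≤ A)
    (hbB : b ≤ B) : ‖a - μ * b‖ ≤ A + |μ| * B :=
  calc ‖a - μ * b‖ ≤ |a| + |μ * b| := abs_sub a (μ * b)
    _ = a + |μ| * b := by rw [abs_mul, abs_of_nonneg ha, abs_of_nonneg hb]
    _ ≤ A + |μ| * B := by gcongr

lemma abs_tsum_sub_sum_range_le {a b : ℕ → ℝ} {N : ℕ} (ha : ∀ n, 0 ≤ a n)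
    (hab : ∀ n, N ≤ n → a n ≤ b n) (hb : Summable b) :
    |∑' n, a n - ∑ n ∈ Finset.range N, a n| ≤ ∑' n, b n - ∑ n ∈ Finset.range N, b n := by
  have hb' : Summable (fun k => b (k + N)) := (summable_nat_add_iff N).2 hb
  have hab' : ∀ k, a (k + N) ≤ b (k + N) := fun k => hab _ (Nat.le_add_left N k)
  have ha' : Summable (fun k => a (k + N)) := hb'.of_nonneg_of_le (fun k => ha _) hab'
  rw [← ((summable_nat_add_iff N).1 ha').sum_add_tsum_nat_add N, ← hb.sum_add_tsum_nat_add N,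
    add_sub_cancel_left, add_sub_cancel_left, abs_of_nonneg (tsum_nonneg fun k => ha _)]
  exact ha'.tsum_le_tsum hab' hb'

section UniformConvergence

variable {ι α : Type*} {s : Set α}

lemma TendstoUniformlyOn.tendstoUniformlyOn_zero_of_sum_range {E : Type*} [AddCommGroup E]
    [UniformSpace E] [IsUniformAddGroup E] {g : ℕ → α → E} {G : α → E}
    (h : TendstoUniformlyOn (fun N x => ∑ n ∈ Finset.range N, g n x) G atTop s) :
    TendstoUniformlyOn g 0 atTop s := by
  have h' := (h.seq_tendstoUniformlyOn (· + 1) (tendsto_add_atTop_nat 1)).fun_sub h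
  simp only [Finset.sum_range_succ, add_sub_cancel_left, sub_self] at h'
  exact h'

lemma tendstoUniformlyOn_zero_of_norm_le {E : Type*} [SeminormedAddGroup E] {l : Filter ι}
    {f : ι → α → E} {g : ι → α → ℝ} (hg : TendstoUniformlyOn g 0 l s)
    (hfg : ∀ᶠ i in l, ∀ x ∈ s, ‖f i x‖ ≤ g i x) : TendstoUniformlyOn f 0 l s := by
  rw [SeminormedAddGroup.tendstoUniformlyOn_zero] at hg ⊢
  intro ε hε
  filter_upwards [hg ε hε, hfg] with i hgi hfgi x hx
  exact (hfgi x hx).trans_lt ((le_abs_self _).trans_lt (hgi x hx))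

lemma tendstoUniformlyOn_tsum_of_le {f g : ℕ → α → ℝ} (hf : ∀ n, ∀ x ∈ s, 0 ≤ f n x)
    (hg : ∀ n, ∀ x ∈ s, 0 ≤ g n x) (hfg : ∀ n, 0 < n → ∀ x ∈ s, f n x ≤ g n x)
    (hsum : TendstoUniformlyOn (fun N x => ∑ n ∈ Finset.range N, g n x)
      (fun x => ∑' n, g n x) atTop s) :
    TendstoUniformlyOn (fun N x => ∑ n ∈ Finset.range N, f n x) (fun x => ∑' n, f n x) atTop s := by
  have hgx : ∀ x ∈ s, Summable (g · x) := fun x hx =>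
    ((hasSum_iff_tendsto_nat_of_nonneg (fun n => hg n x hx) _).2 (hsum.tendsto_at hx)).summable
  rw [Metric.tendstoUniformlyOn_iff] at hsum ⊢
  intro ε hε
  filter_upwards [hsum ε hε, eventually_gt_atTop 0] with N hN hN0 x hx
  rw [Real.dist_eq]
  calc |∑' n, f n x - ∑ n ∈ Finset.range N, f n x|
      ≤ ∑' n, g n x - ∑ n ∈ Finset.range N, g n x :=
        abs_tsum_sub_sum_range_le (fun n => hf n x hx)
          (fun n hn => hfg n (hN0.trans_le hn) x hx) (hgx x hx)
    _ ≤ dist (∑' n, g n x) (∑ n ∈ Finset.range N, g n x) := Real.dist_eq _ _ ▸ le_abs_self _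
    _ < ε := hN x hx

lemma TendstoUniformlyOn.const_mul {l : Filter ι} {f : ι → α → ℝ} {g : α → ℝ}
    (h : TendstoUniformlyOn f g l s) (c : ℝ) :
    TendstoUniformlyOn (fun i x => c * f i x) (fun x => c * g x) l s :=
  (uniformContinuous_const_smul c).comp_tendstoUniformlyOn h

lemma tendstoLocallyUniformlyOn_of_forall_isCompact [TopologicalSpace α]
    [WeaklyLocallyCompactSpace α] {E : Type*} [UniformSpace E] {l : Filter ι} {F : ι → α → E}
    {f : α → E} (hs : IsClosed s) (h : ∀ K ⊆ s, IsCompact K → TendstoUniformlyOn F f l K) :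
    TendstoLocallyUniformlyOn F f l s :=
  tendstoLocallyUniformlyOn_of_forall_exists_nhds fun x _ =>
    let ⟨K, hK, hKx⟩ := exists_compact_mem_nhds x
    ⟨s ∩ K, inter_mem_nhdsWithin s hKx, h _ inter_subset_left (hK.inter_left hs)⟩

end UniformConvergence

lemma continuousOn_and_hasDerivAt_of_tendstoLocallyUniformlyOn {F F' : ℕ → ℝ → ℝ} {f g : ℝ → ℝ}
    {a : ℝ} (hF : ∀ N, ∀ x ∈ Ici a, HasDerivWithinAt (F N) (F' N x) (Ici a) x)
    (hFf : TendstoLocallyUniformlyOn F f atTop (Ici a))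
    (hF'g : TendstoLocallyUniformlyOn F' g atTop (Ici a)) :
    ContinuousOn f (Ici a) ∧ ∀ x ∈ Ioi a, HasDerivAt f (g x) x :=
  ⟨hFf.continuousOn (Frequently.of_forall fun N x hx => (hF N x hx).continuousWithinAt),
    fun _ hx => hasDerivAt_of_tendstoLocallyUniformlyOn isOpen_Ioi
      (hF'g.mono Ioi_subset_Ici_self)
      (Eventually.of_forall fun N y hy => (hF N y (mem_Ici_of_Ioi hy)).hasDerivAt (Ici_mem_nhds hy))
      (fun _ hy => hFf.tendsto_at (mem_Ici_of_Ioi hy)) hx⟩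

lemma eq_of_hasDerivAt_zero {f : ℝ → ℝ} {a : ℝ} (hf : ContinuousOn f (Ici a))
    (hf' : ∀ x ∈ Ioi a, HasDerivAt f 0 x) : ∀ x ∈ Ici a, f x = f a := by
  intro x hx
  rcases (mem_Ici.1 hx).eq_or_lt with rfl | hax
  · rfl
  obtain ⟨c, hc, hslope⟩ := exists_hasDerivAt_eq_slope f (fun _ => 0) hax
    (hf.mono Icc_subset_Ici_self) fun y hy => hf' y hy.1
  rw [eq_comm, div_eq_zero_iff, sub_eq_zero, sub_eq_zero] at hslope
  exact hslope.resolve_right hax.ne'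

lemma eq_of_hasDerivAt_eq_sub {f : ℝ → ℝ} {a c : ℝ} (hf : ContinuousOn f (Ici a))
    (hf' : ∀ x ∈ Ioi a, HasDerivAt f (c - f x) x) (ha : f a = c) : ∀ x ∈ Ici a, f x = c := by
  have hconst := eq_of_hasDerivAt_zero (f := fun x => Real.exp x * (f x - c))
    (Real.continuous_exp.continuousOn.mul (hf.sub continuousOn_const)) fun x hx =>
      ((Real.hasDerivAt_exp x).fun_mul ((hf' x hx).sub_const c)).congr_deriv (by ring)
  intro x hx
  have := hconst x hx
  rw [ha, sub_self, mul_zero, mul_eq_zero] at this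
  linarith [this.resolve_left (Real.exp_ne_zero x)]

section MeanField

variable {μ : ℝ} {p : ℝ → ℕ → ℝ}

lemma hasDerivWithinAt_sum_range_succ {s : Set ℝ} {t : ℝ}
    (hp : ∀ n, HasDerivWithinAt (fun u => p u n) (gen μ (p t) n) s t) (N : ℕ) :
    HasDerivWithinAt (fun u => ∑ n ∈ Finset.range (N + 1), p u n)
      ((N + 1) * p t (N + 1) - μ * p t N) s t := by
  rw [← sum_range_succ_gen]
  exact HasDerivWithinAt.fun_sum fun n _ => hp n

lemma hasDerivWithinAt_sum_range_succ_mul {s : Set ℝ} {t : ℝ}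
    (hp : ∀ n, HasDerivWithinAt (fun u => p u n) (gen μ (p t) n) s t) (N : ℕ) :
    HasDerivWithinAt (fun u => ∑ n ∈ Finset.range (N + 1), (n : ℝ) * p u n)
      (N * (N + 1) * p t (N + 1) - μ * (N * p t N) + μ * ∑ n ∈ Finset.range N, p t n
        - ∑ n ∈ Finset.range (N + 1), (n : ℝ) * p t n) s t := by
  rw [← sum_range_succ_mul_gen]
  exact HasDerivWithinAt.fun_sum fun n _ => (hp n).const_mul _

variable {K : Set ℝ}

lemma tendstoUniformlyOn_sum_range_of_sq (hp : ∀ t ∈ K, ∀ n, 0 ≤ p t n)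
    (hsq : TendstoUniformlyOn (fun N t => ∑ n ∈ Finset.range N, (n : ℝ) ^ 2 * p t n)
      (fun t => ∑' n : ℕ, (n : ℝ) ^ 2 * p t n) atTop K) :
    TendstoUniformlyOn (fun N t => ∑ n ∈ Finset.range N, p t n) (fun t => ∑' n, p t n) atTop K :=
  tendstoUniformlyOn_tsum_of_le (fun n t ht => hp t ht n)
    (fun n t ht => mul_nonneg (sq_nonneg _) (hp t ht n))
    (fun n hn t ht => le_mul_of_one_le_left (hp t ht n) (one_le_pow₀ (Nat.one_le_cast.2 hn)))
    hsq

lemma tendstoUniformlyOn_sum_range_mul_of_sq (hp : ∀ t ∈ K, ∀ n, 0 ≤ p t n)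
    (hsq : TendstoUniformlyOn (fun N t => ∑ n ∈ Finset.range N, (n : ℝ) ^ 2 * p t n)
      (fun t => ∑' n : ℕ, (n : ℝ) ^ 2 * p t n) atTop K) :
    TendstoUniformlyOn (fun N t => ∑ n ∈ Finset.range N, (n : ℝ) * p t n)
      (fun t => ∑' n : ℕ, (n : ℝ) * p t n) atTop K :=
  tendstoUniformlyOn_tsum_of_le (fun n t ht => mul_nonneg n.cast_nonneg (hp t ht n))
    (fun n t ht => mul_nonneg (sq_nonneg _) (hp t ht n))
    (fun n hn t ht => mul_le_mul_of_nonneg_right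
      (le_self_pow₀ (Nat.one_le_cast.2 hn) two_ne_zero) (hp t ht n))
    hsq

lemma tendstoUniformlyOn_boundary
    (hsq : TendstoUniformlyOn (fun N t => ∑ n ∈ Finset.range N, (n : ℝ) ^ 2 * p t n)
      (fun t => ∑' n : ℕ, (n : ℝ) ^ 2 * p t n) atTop K) :
    TendstoUniformlyOn (fun (N : ℕ) t => ((N : ℝ) + 1) ^ 2 * p t (N + 1) + |μ| * (N ^ 2 * p t N))
      0 atTop K := by
  have hterm := hsq.tendstoUniformlyOn_zero_of_sum_range
  have h := (hterm.seq_tendstoUniformlyOn (· + 1) (tendsto_add_atTop_nat 1)).fun_add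
    (hterm.const_mul |μ|)
  simp only [Pi.zero_apply, mul_zero, add_zero, Nat.cast_add, Nat.cast_one] at h
  exact h

lemma tendstoUniformlyOn_deriv_sum_range_succ (hp : ∀ t ∈ K, ∀ n, 0 ≤ p t n)
    (hsq : TendstoUniformlyOn (fun N t => ∑ n ∈ Finset.range N, (n : ℝ) ^ 2 * p t n)
      (fun t => ∑' n : ℕ, (n : ℝ) ^ 2 * p t n) atTop K) :
    TendstoUniformlyOn (fun (N : ℕ) t => ((N : ℝ) + 1) * p t (N + 1) - μ * p t N) 0 atTop K := by
  refine tendstoUniformlyOn_zero_of_norm_le (tendstoUniformlyOn_boundary (μ := μ) hsq) ?_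
  filter_upwards [eventually_ge_atTop 1] with N hN t ht
  exact norm_sub_mul_le_of_le μ (by positivity [hp t ht (N + 1)]) (hp t ht N)
    (mul_le_mul_of_nonneg_right (le_self_pow₀ (le_add_of_nonneg_left N.cast_nonneg) two_ne_zero)
      (hp t ht (N + 1)))
    (le_mul_of_one_le_left (hp t ht N) (one_le_pow₀ (Nat.one_le_cast.2 hN)))

lemma tendstoUniformlyOn_deriv_sum_range_succ_mul (hp : ∀ t ∈ K, ∀ n, 0 ≤ p t n)
    (hsq : TendstoUniformlyOn (fun N t => ∑ n ∈ Finset.range N, (n : ℝ) ^ 2 * p t n)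
      (fun t => ∑' n : ℕ, (n : ℝ) ^ 2 * p t n) atTop K) :
    TendstoUniformlyOn (fun (N : ℕ) t => N * (N + 1) * p t (N + 1) - μ * (N * p t N)
        + μ * ∑ n ∈ Finset.range N, p t n - ∑ n ∈ Finset.range (N + 1), (n : ℝ) * p t n)
      (fun t => μ * ∑' n, p t n - ∑' n : ℕ, (n : ℝ) * p t n) atTop K := by
  have hboundary : TendstoUniformlyOn
      (fun (N : ℕ) t => N * (N + 1) * p t (N + 1) - μ * (N * p t N)) 0 atTop K := by
    refine tendstoUniformlyOn_zero_of_norm_le (tendstoUniformlyOn_boundary (μ := μ) hsq)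
      (Eventually.of_forall fun N t ht => ?_)
    have hN := N.cast_nonneg (α := ℝ)
    exact norm_sub_mul_le_of_le μ (by positivity [hp t ht (N + 1)]) (by positivity [hp t ht N])
      (mul_le_mul_of_nonneg_right (by nlinarith) (hp t ht (N + 1)))
      (mul_le_mul_of_nonneg_right (by exact_mod_cast Nat.le_self_pow two_ne_zero N) (hp t ht N))
  have h := (hboundary.fun_add ((tendstoUniformlyOn_sum_range_of_sq hp hsq).const_mul μ)).fun_sub
    ((tendstoUniformlyOn_sum_range_mul_of_sq hp hsq).seq_tendstoUniformlyOn (· + 1)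
      (tendsto_add_atTop_nat 1))
  simp only [Pi.zero_apply, zero_add] at h
  exact h

lemma continuousOn_and_hasDerivAt_mass
    (hode : ∀ t ∈ Ici (0 : ℝ), ∀ n, HasDerivWithinAt (fun s => p s n) (gen μ (p t) n) (Ici 0) t)
    (hpos : ∀ t ∈ Ici (0 : ℝ), ∀ n, 0 ≤ p t n)
    (hunif : UnifConvOnCompacts (fun n t => (n : ℝ) ^ 2 * p t n)) :
    ContinuousOn (fun t => ∑' n, p t n) (Ici 0) ∧
      ∀ t ∈ Ioi 0, HasDerivAt (fun t => ∑' n, p t n) 0 t :=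
  continuousOn_and_hasDerivAt_of_tendstoLocallyUniformlyOn
    (fun N t ht => hasDerivWithinAt_sum_range_succ (hode t ht) N)
    (tendstoLocallyUniformlyOn_of_forall_isCompact isClosed_Ici fun K hK hKc =>
      (tendstoUniformlyOn_sum_range_of_sq (fun t ht => hpos t (hK ht))
        (hunif K hK hKc)).seq_tendstoUniformlyOn (· + 1) (tendsto_add_atTop_nat 1))
    (tendstoLocallyUniformlyOn_of_forall_isCompact isClosed_Ici fun K hK hKc =>
      tendstoUniformlyOn_deriv_sum_range_succ (fun t ht => hpos t (hK ht)) (hunif K hK hKc))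

lemma continuousOn_and_hasDerivAt_mean
    (hode : ∀ t ∈ Ici (0 : ℝ), ∀ n, HasDerivWithinAt (fun s => p s n) (gen μ (p t) n) (Ici 0) t)
    (hpos : ∀ t ∈ Ici (0 : ℝ), ∀ n, 0 ≤ p t n)
    (hunif : UnifConvOnCompacts (fun n t => (n : ℝ) ^ 2 * p t n)) :
    ContinuousOn (fun t => ∑' n : ℕ, (n : ℝ) * p t n) (Ici 0) ∧
      ∀ t ∈ Ioi 0, HasDerivAt (fun t => ∑' n : ℕ, (n : ℝ) * p t n)
        (μ * ∑' n, p t n - ∑' n : ℕ, (n : ℝ) * p t n) t :=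
  continuousOn_and_hasDerivAt_of_tendstoLocallyUniformlyOn
    (fun N t ht => hasDerivWithinAt_sum_range_succ_mul (hode t ht) N)
    (tendstoLocallyUniformlyOn_of_forall_isCompact isClosed_Ici fun K hK hKc =>
      (tendstoUniformlyOn_sum_range_mul_of_sq (fun t ht => hpos t (hK ht))
        (hunif K hK hKc)).seq_tendstoUniformlyOn (· + 1) (tendsto_add_atTop_nat 1))
    (tendstoLocallyUniformlyOn_of_forall_isCompact isClosed_Ici fun K hK hKc =>
      tendstoUniformlyOn_deriv_sum_range_succ_mul (fun t ht => hpos t (hK ht)) (hunif K hK hKc))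

end MeanField

theorem V_invariant_general (μ : ℝ) (p : ℝ → ℕ → ℝ)
    (hode : ∀ t ∈ Set.Ici (0 : ℝ), ∀ n : ℕ,
      HasDerivWithinAt (fun s => p s n) (gen μ (p t) n) (Set.Ici 0) t)
    (hpos : ∀ t ∈ Set.Ici (0 : ℝ), ∀ n : ℕ, 0 ≤ p t n)
    (hunif : UnifConvOnCompacts (fun n t => (n : ℝ) ^ 2 * p t n))
    (h0 : memV μ (p 0)) :
    ∀ t ∈ Set.Ici (0 : ℝ), (∑' n : ℕ, p t n = 1) ∧ (∑' n : ℕ, (n : ℝ) * p t n = μ) := by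
  obtain ⟨-, hmass0, hmean0⟩ := h0
  obtain ⟨hmass_cont, hmass_deriv⟩ := continuousOn_and_hasDerivAt_mass hode hpos hunif
  have hmass : ∀ t ∈ Ici (0 : ℝ), ∑' n, p t n = 1 := fun t ht =>
    (eq_of_hasDerivAt_zero hmass_cont hmass_deriv t ht).trans hmass0
  obtain ⟨hmean_cont, hmean_deriv⟩ := continuousOn_and_hasDerivAt_mean hode hpos hunif
  have hmean := eq_of_hasDerivAt_eq_sub hmean_cont
    (fun t ht => by simpa only [hmass t (mem_Ici_of_Ioi ht), mul_one] using hmean_deriv t ht) hmean0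
  exact fun t ht => ⟨hmass t ht, hmean t ht⟩

/-- Invariance of `V_μ` under the mean-field evolution `d/dt p(t) = 𝓛[p(t)]`. -/
theorem V_invariant (μ : ℝ) (hμ : 0 < μ) (p : ℝ → ℕ → ℝ)
    (hode : ∀ t ∈ Set.Ici (0 : ℝ), ∀ n : ℕ,
      HasDerivWithinAt (fun s => p s n) (gen μ (p t) n) (Set.Ici 0) t)
    (hpos : ∀ t ∈ Set.Ici (0 : ℝ), ∀ n : ℕ, 0 ≤ p t n)
    (hunif : UnifConvOnCompacts (fun n t => (n : ℝ) ^ 2 * p t n))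
    (h0 : memV μ (p 0)) :
    ∀ t ∈ Set.Ici (0 : ℝ), (∑' n : ℕ, p t n = 1) ∧ (∑' n : ℕ, (n : ℝ) * p t n = μ) :=
  V_invariant_general μ p hode hpos hunif h0
end

section
/- Let μ > 0 and let p ∈ V_μ satisfy 𝓛[p]_n = 0 for every n ∈ ℕ. Then p is the Poisson distribution with mean μ: p_n = μⁿ·e^{−μ}/n! for all n ∈ ℕ. In other words, the Poisson distribution with mean μ is the unique equilibrium of the poor-biased generator in V_μ. -/
/-- The Poisson distribution with mean `μ`: `p*_n = μ^n e^{-μ} / n!`. -/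
noncomputable def pstar (μ : ℝ) (n : ℕ) : ℝ := μ ^ n * Real.exp (-μ) / n.factorial

/-!
The generator is a discrete divergence: `𝓛[p]_n = J_n - J_{n-1}` for the flux
`J_n = (n+1) p_{n+1} - μ p_n` (with `J_{-1} = 0`). An equilibrium therefore has zero flux, i.e.
`(n+1) p_{n+1} = μ p_n`, so `p_n = p_0 μⁿ / n!`; normalisation then gives `p_0 = e^{-μ}`.
-/

open scoped Nat
open Real

noncomputable def flux (μ : ℝ) (p : ℕ → ℝ) (n : ℕ) : ℝ := ((n : ℝ) + 1) * p (n + 1) - μ * p n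

lemma gen_zero_eq_flux (μ : ℝ) (p : ℕ → ℝ) : gen μ p 0 = flux μ p 0 := by
  simp [gen, flux]

lemma gen_succ_eq_flux_sub_flux (μ : ℝ) (p : ℕ → ℝ) (n : ℕ) :
    gen μ p (n + 1) = flux μ p (n + 1) - flux μ p n := by
  simp only [gen, flux]
  push_cast
  ring

lemma flux_eq_zero_of_gen_eq_zero {μ : ℝ} {p : ℕ → ℝ} (h : ∀ n, gen μ p n = 0) :
    ∀ n, flux μ p n = 0
  | 0 => by rw [← gen_zero_eq_flux, h]
  | n + 1 => by
    have := gen_succ_eq_flux_sub_flux μ p n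
    rw [h, flux_eq_zero_of_gen_eq_zero h n] at this
    linarith

lemma eq_mul_pow_div_factorial_of_flux_eq_zero {μ : ℝ} {p : ℕ → ℝ}
    (h : ∀ n, flux μ p n = 0) : ∀ n, p n = p 0 * (μ ^ n / n !)
  | 0 => by simp
  | n + 1 => by
    have hn : ((n : ℝ) + 1) * p (n + 1) = μ * p n := sub_eq_zero.mp (h n)
    rw [eq_mul_pow_div_factorial_of_flux_eq_zero h n] at hn
    rw [Nat.factorial_succ, Nat.cast_mul, Nat.cast_succ]
    field_simp at hn ⊢
    linear_combination hn

theorem poisson_unique_equilibrium_general (μ : ℝ) (p : ℕ → ℝ)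
    (hV : memV μ p) (heq : ∀ n : ℕ, gen μ p n = 0) :
    ∀ n : ℕ, p n = pstar μ n := by
  have hp : ∀ n, p n = p 0 * (μ ^ n / n !) :=
    eq_mul_pow_div_factorial_of_flux_eq_zero (flux_eq_zero_of_gen_eq_zero heq)
  have hsum : HasSum p (p 0 * exp μ) := by
    have := (NormedSpace.expSeries_div_hasSum_exp μ).mul_left (p 0)
    rwa [← funext hp, ← exp_eq_exp_ℝ] at this
  have hp0 : p 0 = exp (-μ) := by
    rw [exp_neg]
    exact eq_inv_of_mul_eq_one_left (hsum.tsum_eq.symm.trans hV.2.1)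
  intro n
  rw [hp n, hp0, pstar]
  ring

/-- The Poisson distribution with mean `μ` is the unique equilibrium of the
poor-biased generator in `V_μ`. -/
theorem poisson_unique_equilibrium (μ : ℝ) (hμ : 0 < μ) (p : ℕ → ℝ)
    (hV : memV μ p) (heq : ∀ n : ℕ, gen μ p n = 0) :
    ∀ n : ℕ, p n = pstar μ n :=
  poisson_unique_equilibrium_general μ p hV heq
end

section
/- Fix integers N ≥ 2 and μ ≥ 1. The multinomial distribution M_N is a stationary distribution of the poor-biased master equation: for every S ∈ 𝒜_{N,μ}, ∑_{i≠j} [((S_i+1)/N)·M_N(S + e_i − e_j)·1_{S_j ≥ 1} − (S_i/N)·M_N(S)] = 0, where e_i is the i-th standard basis vector of ℕ^N. -/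
/-! The multinomial weights satisfy detailed balance: moving a dollar from `j` to `i`
multiplies `∏ₖ Sₖ!` by `(S_i + 1) / S_j`, so `(S_i + 1) M_N(S + e_i - e_j) = S_j M_N(S)`.
Hence the `(i, j)` term of the master equation is `(S_j - S_i) / N · M_N(S)`, which is
antisymmetric in `(i, j)` and sums to zero. -/

open MeasureTheory ENNReal

noncomputable section

/-- The configuration obtained from `S` by adding a dollar to agent `i` and removing
one from agent `j`, i.e. `S + e_i - e_j`. -/
def moveDollar {N : ℕ} (S : Fin N → ℕ) (i j : Fin N) : Fin N → ℕ :=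
  Function.update (Function.update S i (S i + 1)) j (S j - 1)

/-- The right-hand side of the poor-biased master equation at configuration `S`:
`∑_{i ≠ j} [((S_i+1)/N) P(S + e_i - e_j) 1_{S_j ≥ 1} - (S_i/N) P(S)]`. -/
def masterRHS {N : ℕ} (P : Measure (Fin N → ℕ)) (S : Fin N → ℕ) : ℝ :=
  ∑ i : Fin N, ∑ j : Fin N,
    if i ≠ j then
      (((S i : ℝ) + 1) / N) * (P {moveDollar S i j}).toReal * (if 1 ≤ S j then 1 else 0)
        - ((S i : ℝ) / N) * (P {S}).toReal
    else 0

/-- A solution of the poor-biased master equation on `[0, ∞)`: a family of probability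
measures on `ℕ^N` whose point masses are differentiable in time with derivative given
by the master equation. -/
def IsMasterSolution {N : ℕ} (P : ℝ → Measure (Fin N → ℕ)) : Prop :=
  (∀ t ∈ Set.Ici (0 : ℝ), IsProbabilityMeasure (P t)) ∧
    ∀ S : Fin N → ℕ, ∀ t ∈ Set.Ici (0 : ℝ),
      HasDerivWithinAt (fun s => ((P s) {S}).toReal) (masterRHS (P t) S) (Set.Ici 0) t

/-- The multinomial distribution `M_N` on `𝒜_{N,μ}` (extended by `0` to `ℕ^N`):
`M_N(S) = ((Nμ)! / (S_1! ⋯ S_N!)) N^{-Nμ}` when `∑_i S_i = Nμ`. -/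
def MNmeas (N μ : ℕ) : Measure (Fin N → ℕ) :=
  Measure.sum (fun S : Fin N → ℕ =>
    (if ∑ i, S i = N * μ then
        ENNReal.ofReal (((N * μ).factorial : ℝ) / ((∏ i, (S i).factorial : ℕ) * (N : ℝ) ^ (N * μ)))
      else 0) • Measure.dirac S)

open Function Finset

@[to_additive]
theorem prod_comp_update_update_mul {ι α M : Type*} [Fintype ι] [DecidableEq ι] [CommMonoid M]
    (g : α → M) (S : ι → α) {i j : ι} (hij : i ≠ j) (a b : α) :
    (∏ k, g (update (update S i a) j b k)) * (g (S i) * g (S j)) =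
      g a * g b * ∏ k, g (S k) := by
  have split_pair (T : ι → α) : ∏ k, g (T k) = g (T i) * g (T j) * ∏ k ∈ {i, j}ᶜ, g (T k) := by
    rw [← prod_pair (f := fun k => g (T k)) hij, prod_mul_prod_compl]
  have off_pair : ∏ k ∈ {i, j}ᶜ, g (update (update S i a) j b k) = ∏ k ∈ {i, j}ᶜ, g (S k) :=
    prod_congr rfl fun k hk => by
      simp only [mem_compl, mem_insert, mem_singleton, not_or] at hk
      rw [update_of_ne hk.2, update_of_ne hk.1]
  rw [split_pair (update _ j b), split_pair S, off_pair, update_self,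
    update_of_ne hij, update_self]
  ac_rfl

theorem sum_moveDollar {N : ℕ} (S : Fin N → ℕ) {i j : Fin N} (hij : i ≠ j) (hj : 1 ≤ S j) :
    ∑ k, moveDollar S i j k = ∑ k, S k := by
  have h := sum_comp_update_update_add id S hij (S i + 1) (S j - 1)
  simp only [id] at h
  unfold moveDollar
  omega

theorem mul_prod_factorial_moveDollar {N : ℕ} (S : Fin N → ℕ) {i j : Fin N} (hij : i ≠ j)
    (hj : 1 ≤ S j) :
    S j * ∏ k, (moveDollar S i j k).factorial = (S i + 1) * ∏ k, (S k).factorial := by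
  have h := prod_comp_update_update_mul Nat.factorial S hij (S i + 1) (S j - 1)
  rw [Nat.factorial_succ, ← Nat.mul_factorial_pred (by omega : S j ≠ 0)] at h
  apply Nat.eq_of_mul_eq_mul_right (Nat.mul_pos (S i).factorial_pos (S j - 1).factorial_pos)
  unfold moveDollar
  linarith [h]

theorem masterRHS_eq_zero_of_detailed_balance {N : ℕ} (P : Measure (Fin N → ℕ)) (S : Fin N → ℕ)
    (hP : ∀ i j, i ≠ j → 1 ≤ S j →
      ((S i : ℝ) + 1) * (P {moveDollar S i j}).toReal = S j * (P {S}).toReal) :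
    masterRHS P S = 0 := by
  have flux (i j : Fin N) : (if i ≠ j then
      (((S i : ℝ) + 1) / N) * (P {moveDollar S i j}).toReal * (if 1 ≤ S j then 1 else 0)
        - ((S i : ℝ) / N) * (P {S}).toReal else 0) =
      ((S j : ℝ) - S i) / N * (P {S}).toReal := by
    by_cases hij : i = j
    · simp [hij]
    by_cases hj : 1 ≤ S j
    · rw [if_pos hij, if_pos hj, mul_one, div_mul_eq_mul_div, hP i j hij hj]
      ring
    · rw [if_pos hij, if_neg hj, Nat.lt_one_iff.mp (not_le.mp hj)]
      simp only [mul_zero, Nat.cast_zero]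
      ring
  rw [masterRHS, Fintype.sum_congr _ _ fun i => Fintype.sum_congr _ _ (flux i)]
  simp only [← sum_mul, ← sum_div, sum_sub_distrib, sum_const, ← smul_sum, sub_self, zero_div,
    zero_mul]

def multinomialWeight (N μ : ℕ) (S : Fin N → ℕ) : ℝ :=
  ((N * μ).factorial : ℝ) / ((∏ i, (S i).factorial : ℕ) * (N : ℝ) ^ (N * μ))

theorem MNmeas_singleton_toReal {N μ : ℕ} {S : Fin N → ℕ} (hS : ∑ i, S i = N * μ) :
    (MNmeas N μ {S}).toReal = multinomialWeight N μ S := by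
  rw [MNmeas, Measure.sum_apply _ (measurableSet_singleton S),
    tsum_eq_single S fun T hT => by split_ifs <;> simp [hT], if_pos hS, Measure.smul_apply,
    Measure.dirac_apply_of_mem (Set.mem_singleton S), smul_eq_mul, mul_one,
    ENNReal.toReal_ofReal (by positivity)]
  rfl

theorem multinomialWeight_detailed_balance {N μ : ℕ} (S : Fin N → ℕ) {i j : Fin N} (hij : i ≠ j)
    (hj : 1 ≤ S j) :
    ((S i : ℝ) + 1) * multinomialWeight N μ (moveDollar S i j) =
      S j * multinomialWeight N μ S := by
  have hN : (0 : ℝ) < N := by exact_mod_cast i.pos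
  have hprod : (S j : ℝ) * ∏ k, ((moveDollar S i j k).factorial : ℝ) =
      ((S i : ℝ) + 1) * ∏ k, ((S k).factorial : ℝ) := by
    exact_mod_cast mul_prod_factorial_moveDollar S hij hj
  unfold multinomialWeight
  push_cast
  rw [mul_div_assoc', mul_div_assoc', div_eq_div_iff (by positivity) (by positivity)]
  linear_combination (-((N * μ).factorial : ℝ) * (N : ℝ) ^ (N * μ)) * hprod

theorem multinomial_stationary_general (N μ : ℕ) :
    ∀ S : Fin N → ℕ, ∑ i, S i = N * μ → masterRHS (MNmeas N μ) S = 0 := by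
  intro S hS
  refine masterRHS_eq_zero_of_detailed_balance _ S fun i j hij hj => ?_
  rw [MNmeas_singleton_toReal hS, MNmeas_singleton_toReal ((sum_moveDollar S hij hj).trans hS)]
  exact multinomialWeight_detailed_balance S hij hj

/-- The multinomial distribution `M_N` is stationary for the poor-biased master equation. -/
theorem multinomial_stationary (N μ : ℕ) (hN : 2 ≤ N) (hμ : 1 ≤ μ) :
    ∀ S : Fin N → ℕ, ∑ i, S i = N * μ → masterRHS (MNmeas N μ) S = 0 :=
  multinomial_stationary_general N μ

end
end

section
/- Fix integers N ≥ 2 and μ ≥ 1. Let P : [0,∞) → probability measures on ℕ^N be a solution of the poor-biased master equation whose initial condition P_0 is supported on 𝒜_{N,μ}. Then for every t ≥ 0, W₁(P_t, M_N) ≤ 2·μ·e^{−t}, where W₁ is the normalized Wasserstein-1 distance on ℕ^N. -/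
/-!
Label the dollars. In the poor-biased dynamics each dollar, independently of the others, jumps at
rate 1 to an agent chosen uniformly at random, so after time `t` a dollar started at agent `a` sits
at `b` with probability `e^{-t} δ_{ab} + (1 - e^{-t}) / N`. The law of the occupation numbers of
such independent dollars solves the master equation, and the master equation is a linear ODE on
each finite set `{S | ∑ S = m}`; hence `P_t` is the mixture over `P_0` of these laws.

Coupling each dollar with an independent uniform position that differs from it with probability
at most `e^{-t}` couples `P_t` with the occupation law of `Nμ` independent uniform dollars, which
is `M_N`. A disagreeing dollar moves the occupation vector by at most 2 in `ℓ¹`, so the expected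
normalized cost is at most `(2 / N) · Nμ · e^{-t} = 2μ e^{-t}`.
-/

open MeasureTheory ENNReal

noncomputable section

/-- The normalized Wasserstein-1 distance (valued in `ℝ≥0∞`) between two measures on
`ℕ^d`: the infimum over couplings of the expected normalized `ℓ¹` distance. -/
def W1 (d : ℕ) (π₁ π₂ : Measure (Fin d → ℕ)) : ℝ≥0∞ :=
  ⨅ (π : Measure ((Fin d → ℕ) × (Fin d → ℕ))) (_ : π.map Prod.fst = π₁)
      (_ : π.map Prod.snd = π₂),
    ∫⁻ z, (∑ j : Fin d, (Nat.dist (z.1 j) (z.2 j) : ℝ≥0∞)) / (d : ℝ≥0∞) ∂π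

open Finset

lemma Nat.cast_dist_eq_abs (m n : ℕ) : (Nat.dist m n : ℝ) = |(m : ℝ) - n| := by
  rcases le_total m n with h | h
  · rw [Nat.dist_eq_sub_of_le h, Nat.cast_sub h, abs_sub_comm, abs_of_nonneg (by simpa using h)]
  · rw [Nat.dist_eq_sub_of_le_right h, Nat.cast_sub h, abs_of_nonneg (by simpa using h)]

namespace PoorBiased

section Occupancy

-- The `r`-th dollar of agent `a` in the configuration `S` is `⟨a, r⟩`.
abbrev Dollars {α : Type*} (S : α → ℕ) := Σ a, Fin (S a)

lemma card_dollars {α : Type*} [Fintype α] (S : α → ℕ) :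
    Fintype.card (Dollars S) = ∑ a, S a := by
  simp

variable {ι α : Type*} [Fintype ι] [DecidableEq α]

def occupancy (d : ι → α) (a : α) : ℕ := #{k | d k = a}

lemma occupancy_eq_card_subtype (d : ι → α) (a : α) :
    occupancy d a = Fintype.card {k // d k = a} :=
  (Fintype.card_subtype _).symm

lemma sum_occupancy [Fintype α] (d : ι → α) : ∑ a, occupancy d a = Fintype.card ι :=
  (card_eq_sum_card_fiberwise fun k _ => mem_univ (d k)).symm

lemma occupancy_comp_equiv {κ : Type*} [Fintype κ] (d : ι → α) (e : κ ≃ ι) :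
    occupancy (d ∘ e) = occupancy d := by
  funext a
  simp only [occupancy_eq_card_subtype]
  exact Fintype.card_congr (e.subtypeEquiv fun _ => Iff.rfl)

lemma occupancy_sigma_fst [Fintype α] (S : α → ℕ) :
    occupancy (Sigma.fst : Dollars S → α) = S := by
  funext a
  rw [occupancy_eq_card_subtype, Fintype.card_congr (Equiv.sigmaSubtype a), Fintype.card_fin]

lemma exists_occupancy_eq [Fintype α] {T : α → ℕ} (hT : ∑ a, T a = Fintype.card ι) :
    ∃ σ : ι → α, occupancy σ = T := by
  let e : ι ≃ Dollars T := Fintype.equivOfCardEq (by rw [card_dollars, hT])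
  exact ⟨Sigma.fst ∘ e, by rw [occupancy_comp_equiv, occupancy_sigma_fst]⟩

lemma sum_abs_ite_sub_ite [Fintype α] (x y : α) :
    ∑ a, |(if x = a then 1 else 0 : ℝ) - (if y = a then 1 else 0)| = if x = y then 0 else 2 := by
  split_ifs with hxy
  · simp [hxy]
  · have h : ∀ a, |(if x = a then 1 else 0 : ℝ) - (if y = a then 1 else 0)|
        = (if x = a then 1 else 0) + (if y = a then 1 else 0) := fun a => by
      split_ifs <;> simp_all
    simp only [h, sum_add_distrib, sum_ite_eq, mem_univ, if_true]
    norm_num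

lemma sum_dist_occupancy_le [Fintype α] (b c : ι → α) :
    ∑ a, (Nat.dist (occupancy b a) (occupancy c a) : ℝ) ≤ 2 * #{k | b k ≠ c k} := by
  calc ∑ a, (Nat.dist (occupancy b a) (occupancy c a) : ℝ)
      = ∑ a, |∑ k, ((if b k = a then 1 else 0 : ℝ) - (if c k = a then 1 else 0))| := by
        simp only [Nat.cast_dist_eq_abs, occupancy, natCast_card_filter, sum_sub_distrib]
    _ ≤ ∑ a, ∑ k, |(if b k = a then 1 else 0 : ℝ) - (if c k = a then 1 else 0)| :=
        sum_le_sum fun a _ => abs_sum_le_sum_abs _ _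
    _ = 2 * #{k | b k ≠ c k} := by
        rw [sum_comm, natCast_card_filter, mul_sum]
        refine sum_congr rfl fun k _ => ?_
        rw [sum_abs_ite_sub_ite]
        split_ifs <;> simp_all

variable [DecidableEq ι]

lemma occupancy_update_add (d : ι → α) (k : ι) (b a : α) :
    occupancy (Function.update d k b) a + (if d k = a then 1 else 0)
      = occupancy d a + (if b = a then 1 else 0) := by
  simp only [occupancy, card_filter]
  rw [← add_sum_erase _ _ (mem_univ k), ← add_sum_erase _ _ (mem_univ k),
    sum_congr rfl fun l hl => by rw [Function.update_of_ne (ne_of_mem_erase hl)]]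
  simp only [Function.update_self]
  omega

lemma occupancy_update {N : ℕ} {d : ι → Fin N} {k : ι} {i j : Fin N} (hk : d k = j)
    (hij : i ≠ j) : occupancy (Function.update d k i) = moveDollar (occupancy d) i j := by
  funext l
  have := occupancy_update_add d k i l
  simp only [moveDollar, Function.update_apply, hk] at this ⊢
  split_ifs at this ⊢ <;> subst_vars <;> omega

variable [Fintype α]

lemma filter_occupancy_eq_eq_empty {T : α → ℕ} (hT : ∑ a, T a ≠ Fintype.card ι) :
    ({d : ι → α | occupancy d = T} : Finset (ι → α)) = ∅ :=
  filter_false_of_mem fun d _ hd => hT (hd ▸ sum_occupancy d)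

lemma card_perm_comp_eq {σ d : ι → α} (h : occupancy d = occupancy σ) :
    #{g : Equiv.Perm ι | σ ∘ g = d} = ∏ a, (occupancy σ a).factorial := by
  have hfib : ∀ a, Fintype.card {k // d k = a} = Fintype.card {k // σ k = a} := fun a => by
    rw [← occupancy_eq_card_subtype, ← occupancy_eq_card_subtype, h]
  let g₀ : Equiv.Perm ι := Equiv.ofFiberEquiv fun a => Fintype.equivOfCardEq (hfib a)
  have hg₀ : ∀ k, σ (g₀ k) = d k := Equiv.ofFiberEquiv_map _
  have e : {g : Equiv.Perm ι // σ ∘ g = d} ≃ {g : Equiv.Perm ι // σ ∘ g = σ} :=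
    (Equiv.mulRight g₀⁻¹).subtypeEquiv fun g => by
      constructor
      · rintro rfl
        funext k
        simpa using (hg₀ (g₀⁻¹ k)).symm
      · intro hg
        funext k
        rw [← hg₀, ← congrFun hg (g₀ k)]
        simp
  rw [← Fintype.card_subtype, Fintype.card_congr e, DomMulAct.stabilizer_card]
  simp only [occupancy_eq_card_subtype]

theorem card_occupancy_eq_mul_prod_factorial {T : α → ℕ} (hT : ∑ a, T a = Fintype.card ι) :
    #{d : ι → α | occupancy d = T} * ∏ a, (T a).factorial = (Fintype.card ι).factorial := by
  obtain ⟨σ, rfl⟩ := exists_occupancy_eq hT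
  calc #{d : ι → α | occupancy d = occupancy σ} * ∏ a, (occupancy σ a).factorial
      = ∑ d with occupancy d = occupancy σ, #{g : Equiv.Perm ι | σ ∘ g = d} := by
        rw [sum_congr rfl fun d hd => card_perm_comp_eq (mem_filter.mp hd).2, sum_const,
          smul_eq_mul]
    _ = #(univ : Finset (Equiv.Perm ι)) :=
        (card_eq_sum_card_fiberwise fun g _ => by
          simp [occupancy_comp_equiv σ g]).symm
    _ = (Fintype.card ι).factorial := by rw [card_univ, Fintype.card_perm]

end Occupancy

section ProductWeights

variable {ι X Y : Type*} [Fintype ι] [DecidableEq ι] [Fintype X] [Fintype Y]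

lemma sum_prod_mul_comp_fst (p : ι → X × Y → ℝ) (F : (ι → X) → ℝ) :
    ∑ d : ι → X × Y, (∏ k, p k (d k)) * F (fun k => (d k).1)
      = ∑ b : ι → X, (∏ k, ∑ y, p k (b k, y)) * F b := by
  rw [← (Equiv.arrowProdEquivProdArrow ι (fun _ => X) (fun _ => Y)).symm.sum_comp,
    Fintype.sum_prod_type]
  refine sum_congr rfl fun b _ => ?_
  dsimp only [Equiv.arrowProdEquivProdArrow, Equiv.coe_fn_symm_mk]
  rw [← sum_mul, Fintype.prod_sum]

lemma sum_prod_mul_comp_snd (p : ι → X × Y → ℝ) (F : (ι → Y) → ℝ) :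
    ∑ d : ι → X × Y, (∏ k, p k (d k)) * F (fun k => (d k).2)
      = ∑ c : ι → Y, (∏ k, ∑ x, p k (x, c k)) * F c := by
  rw [← (Equiv.arrowProdEquivProdArrow ι (fun _ => X) (fun _ => Y)).symm.sum_comp,
    Fintype.sum_prod_type_right]
  refine sum_congr rfl fun c _ => ?_
  dsimp only [Equiv.arrowProdEquivProdArrow, Equiv.coe_fn_symm_mk]
  rw [← sum_mul, Fintype.prod_sum]

lemma sum_prod_mul_card_filter (p : ι → X → ℝ) (hp : ∀ k, ∑ x, p k x = 1) (q : X → Prop)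
    [DecidablePred q] :
    ∑ d : ι → X, (∏ k, p k (d k)) * #{k | q (d k)} = ∑ k, ∑ x with q x, p k x := by
  simp only [natCast_card_filter, mul_sum]
  rw [sum_comm]
  refine sum_congr rfl fun k _ => ?_
  let r : ι → X → ℝ := fun l x => p l x * if l = k then (if q x then 1 else 0) else 1
  have hr : ∀ d : ι → X, (∏ l, p l (d l)) * (if q (d k) then 1 else 0) = ∏ l, r l (d l) := by
    intro d
    rw [prod_mul_distrib, prod_ite_eq' univ k, if_pos (mem_univ k)]
  have hrl : ∀ l, ∑ x, r l x = if l = k then ∑ x with q x, p k x else 1 := by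
    intro l
    split_ifs with hl
    · subst hl
      simp [r, sum_filter]
    · simp [r, hl, hp]
  rw [sum_congr rfl fun d _ => hr d, ← Fintype.prod_sum, prod_congr rfl fun l _ => hrl l,
    prod_ite_eq' univ k, if_pos (mem_univ k)]

end ProductWeights

section FiniteMixture

variable {X α β : Type*} [MeasurableSpace α]

def diracMixture (s : Finset X) (w : X → ℝ) (f : X → α) : Measure α :=
  ∑ x ∈ s, ENNReal.ofReal (w x) • Measure.dirac (f x)

lemma lintegral_diracMixture [MeasurableSingletonClass α] (s : Finset X) (w : X → ℝ) (f : X → α)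
    (c : α → ℝ≥0∞) :
    ∫⁻ z, c z ∂diracMixture s w f = ∑ x ∈ s, ENNReal.ofReal (w x) * c (f x) := by
  simp [diracMixture, lintegral_finsetSum_measure]

lemma map_diracMixture_apply_singleton [MeasurableSpace β] [MeasurableSingletonClass β]
    [DecidableEq β] {s : Finset X} {w : X → ℝ} (hw : ∀ x ∈ s, 0 ≤ w x) (f : X → α) {g : α → β}
    (hg : Measurable g) (b : β) :
    (diracMixture s w f).map g {b} = ENNReal.ofReal (∑ x ∈ s, if g (f x) = b then w x else 0) := by
  rw [Measure.map_apply hg (measurableSet_singleton b), diracMixture, Measure.finsetSum_apply,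
    ofReal_sum_of_nonneg fun x hx => by split_ifs; exacts [hw x hx, le_rfl]]
  refine sum_congr rfl fun x _ => ?_
  rw [Measure.smul_apply, Measure.dirac_apply' _ (hg (measurableSet_singleton b))]
  split_ifs with h <;> simp [Set.indicator, h]

end FiniteMixture

variable {N : ℕ}

section MasterEquation

section MoveDollar

variable {S : Fin N → ℕ} {i j : Fin N}

lemma moveDollar_apply_left (hij : i ≠ j) : moveDollar S i j i = S i + 1 := by
  simp [moveDollar, hij]

lemma moveDollar_moveDollar (hij : i ≠ j) (hj : 1 ≤ S j) :
    moveDollar (moveDollar S i j) j i = S := by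
  funext l
  simp only [moveDollar, Function.update_apply]
  split_ifs <;> simp_all

lemma sum_moveDollar (hij : i ≠ j) (hj : 1 ≤ S j) : ∑ l, moveDollar S i j l = ∑ l, S l := by
  have hi : i ∈ univ.erase j := mem_erase.mpr ⟨hij, mem_univ i⟩
  rw [moveDollar, sum_update_of_mem (mem_univ j), ← sum_erase_add _ _ (mem_univ j),
    sdiff_singleton_eq_erase, sum_update_of_mem hi, ← add_sum_erase _ _ hi,
    sdiff_singleton_eq_erase]
  omega

end MoveDollar

def masterOp : ((Fin N → ℕ) → ℝ) →ₗ[ℝ] ((Fin N → ℕ) → ℝ) where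
  toFun f S := ∑ i, ∑ j,
    if i ≠ j then
      (((S i : ℝ) + 1) / N) * f (moveDollar S i j) * (if 1 ≤ S j then 1 else 0)
        - ((S i : ℝ) / N) * f S
    else 0
  map_add' f g := by
    funext S
    simp only [Pi.add_apply, ← sum_add_distrib]
    congr! 2 with i _ j _
    split_ifs <;> ring
  map_smul' c f := by
    funext S
    simp only [Pi.smul_apply, smul_eq_mul, RingHom.id_apply, mul_sum]
    congr! 2 with i _ j _
    split_ifs <;> ring

lemma masterOp_apply (f : (Fin N → ℕ) → ℝ) (S : Fin N → ℕ) :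
    masterOp f S = ∑ i, ∑ j,
      if i ≠ j then
        (((S i : ℝ) + 1) / N) * f (moveDollar S i j) * (if 1 ≤ S j then 1 else 0)
          - ((S i : ℝ) / N) * f S
      else 0 := rfl

lemma masterOp_congr {f g : (Fin N → ℕ) → ℝ} {S : Fin N → ℕ}
    (hfg : ∀ T, ∑ i, T i = ∑ i, S i → f T = g T) : masterOp f S = masterOp g S := by
  simp only [masterOp_apply, hfg S rfl]
  congr! 2 with i _ j _
  split_ifs with hij hj
  · rw [hfg _ (sum_moveDollar hij hj)]
  · simp
  · rfl

lemma masterOp_apply_eq (f : (Fin N → ℕ) → ℝ) (S : Fin N → ℕ) :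
    masterOp f S = ((∑ i, ∑ j, if i ≠ j then
        ((S i : ℝ) + 1) * f (moveDollar S i j) * (if 1 ≤ S j then 1 else 0) else 0)
      - (N - 1) * (∑ i, (S i : ℝ)) * f S) / N := by
  have h : ∀ i j, (if i ≠ j then
        ((S i : ℝ) + 1) / N * f (moveDollar S i j) * (if 1 ≤ S j then 1 else 0)
          - (S i : ℝ) / N * f S else 0)
      = (if i ≠ j then ((S i : ℝ) + 1) * f (moveDollar S i j) * (if 1 ≤ S j then 1 else 0)
          else 0) / N - (S i : ℝ) * f S / N + (if i = j then (S i : ℝ) * f S / N else 0) := by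
    intro i j
    split_ifs <;> simp_all <;> ring
  simp only [masterOp_apply, h, sum_add_distrib, sum_sub_distrib, sum_ite_eq, mem_univ, if_true,
    sum_const, card_univ, Fintype.card_fin, nsmul_eq_mul, ← sum_div, ← sum_mul, ← mul_sum]
  ring

def SolvesMaster (f : ℝ → (Fin N → ℕ) → ℝ) : Prop :=
  ∀ S, ∀ t ∈ Set.Ici (0 : ℝ), HasDerivWithinAt (f · S) (masterOp (f t) S) (Set.Ici 0) t

-- `masterOp` preserves the finite level sets `{S | ∑ S = m}`, on which it is a linear ODE.
theorem SolvesMaster.eqOn {f g : ℝ → (Fin N → ℕ) → ℝ} (hf : SolvesMaster f)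
    (hg : SolvesMaster g) (h₀ : f 0 = g 0) : Set.EqOn f g (Set.Ici 0) := by
  intro t ht
  funext S
  let L := piAntidiag (univ : Finset (Fin N)) (∑ i, S i)
  let A : (L → ℝ) →L[ℝ] (L → ℝ) := LinearMap.toContinuousLinearMap <|
    LinearMap.funLeft ℝ ℝ Subtype.val ∘ₗ masterOp ∘ₗ
      Function.ExtendByZero.linearMap ℝ Subtype.val
  have hrestrict : ∀ {u : ℝ → (Fin N → ℕ) → ℝ}, SolvesMaster u → ∀ τ ∈ Set.Ici (0 : ℝ),
      HasDerivWithinAt (fun s (T : L) => u s T) (A fun T => u τ T) (Set.Ici 0) τ := by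
    intro u hu τ hτ
    refine hasDerivWithinAt_pi.mpr fun T => ?_
    refine (hu T τ hτ).congr_deriv (masterOp_congr fun T' hT' => ?_).symm
    have hT'L : T' ∈ L := mem_piAntidiag.mpr ⟨hT'.trans (mem_piAntidiag.mp T.2).1, by simp⟩
    exact Subtype.val_injective.extend_apply (fun T : L => u τ T) 0 ⟨T', hT'L⟩
  have key := ODE_solution_unique (v := fun _ => A) (K := ‖A‖₊) (a := 0) (b := t)
    (f := fun s (T : L) => f s T) (g := fun s (T : L) => g s T) (fun _ => A.lipschitz)
    (fun s hs => (hrestrict hf s hs.1).continuousWithinAt.mono Set.Icc_subset_Ici_self)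
    (fun s hs => (hrestrict hf s hs.1).mono (Set.Ici_subset_Ici.mpr hs.1))
    (fun s hs => (hrestrict hg s hs.1).continuousWithinAt.mono Set.Icc_subset_Ici_self)
    (fun s hs => (hrestrict hg s hs.1).mono (Set.Ici_subset_Ici.mpr hs.1))
    (by simp [h₀])
  exact congrFun (key ⟨ht, le_rfl⟩) ⟨S, by simp [L]⟩

-- `masterRHS P S` unfolds to `masterOp (fun T => (P {T}).toReal) S`.
lemma solvesMaster_of_isMasterSolution {P : ℝ → Measure (Fin N → ℕ)} (hP : IsMasterSolution P) :
    SolvesMaster fun t T => (P t {T}).toReal :=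
  hP.2

end MasterEquation

section DollarProcess

-- Law at time `t` of a dollar started at `a` that jumps at rate 1 to a uniform agent.
def dollarKernel (N : ℕ) (t : ℝ) (a b : Fin N) : ℝ :=
  Real.exp (-t) * (if a = b then 1 else 0) + (1 - Real.exp (-t)) / N

lemma one_sub_exp_neg_nonneg {t : ℝ} (ht : 0 ≤ t) : 0 ≤ 1 - Real.exp (-t) :=
  sub_nonneg.mpr (Real.exp_le_one_iff.mpr (neg_nonpos.mpr ht))

lemma sum_dollarKernel (hN : N ≠ 0) (t : ℝ) (a : Fin N) : ∑ b, dollarKernel N t a b = 1 := by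
  simp only [dollarKernel, sum_add_distrib, ← mul_sum, sum_ite_eq, mem_univ, if_true, sum_const,
    card_univ, Fintype.card_fin, nsmul_eq_mul]
  field_simp
  ring

lemma dollarKernel_zero (a b : Fin N) : dollarKernel N 0 a b = if a = b then 1 else 0 := by
  simp [dollarKernel]

lemma hasDerivAt_dollarKernel (t : ℝ) (a b : Fin N) :
    HasDerivAt (dollarKernel N · a b) (1 / N - dollarKernel N t a b) t := by
  have hexp : HasDerivAt (fun s => Real.exp (-s)) (-Real.exp (-t)) t := by
    simpa using (hasDerivAt_neg t).exp
  refine ((hexp.mul_const _).add ((hexp.const_sub 1).div_const _)).congr_deriv ?_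
  simp only [dollarKernel]
  ring

variable {ι : Type*} [Fintype ι] [DecidableEq ι] (σ : ι → Fin N)

def dollarWeight (t : ℝ) (d : ι → Fin N) : ℝ := ∏ k, dollarKernel N t (σ k) (d k)

lemma dollarWeight_update (t : ℝ) (d : ι → Fin N) (k : ι) (b : Fin N) :
    dollarWeight σ t (Function.update d k b)
      = dollarKernel N t (σ k) b * ∏ l ∈ univ.erase k, dollarKernel N t (σ l) (d l) := by
  rw [dollarWeight, ← mul_prod_erase _ _ (mem_univ k), Function.update_self]
  congr 1
  exact prod_congr rfl fun l hl => by rw [Function.update_of_ne (ne_of_mem_erase hl)]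

lemma hasDerivAt_dollarWeight (hN : N ≠ 0) (t : ℝ) (d : ι → Fin N) :
    HasDerivAt (dollarWeight σ · d)
      (∑ k, (∑ b ∈ univ.erase (d k), dollarWeight σ t (Function.update d k b)
        - (N - 1) * dollarWeight σ t d) / N) t := by
  refine (HasDerivAt.fun_finsetProd fun k _ =>
    hasDerivAt_dollarKernel t (σ k) (d k)).congr_deriv (sum_congr rfl fun k _ => ?_)
  have hd : dollarWeight σ t d = dollarWeight σ t (Function.update d k (d k)) := by simp
  simp only [hd, dollarWeight_update, ← sum_mul,
    sum_erase_eq_sub (mem_univ (d k)), sum_dollarKernel hN, smul_eq_mul]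
  field_simp
  ring

def dollarLaw (t : ℝ) (T : Fin N → ℕ) : ℝ := ∑ d with occupancy d = T, dollarWeight σ t d

lemma dollarLaw_zero (T : Fin N → ℕ) : dollarLaw σ 0 T = if occupancy σ = T then 1 else 0 := by
  have hw : ∀ d, dollarWeight σ 0 d = if σ = d then 1 else 0 := fun d => by
    simp only [dollarWeight, dollarKernel_zero, prod_boole, mem_univ, true_implies, funext_iff]
  simp [dollarLaw, hw]

lemma sum_sum_update_eq_sum_sum (G : (ι → Fin N) → ℝ) {T : Fin N → ℕ} {i j : Fin N}
    (hij : i ≠ j) (hj : 1 ≤ T j) :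
    ∑ d with occupancy d = T, ∑ k with d k = j, G (Function.update d k i)
      = ∑ d with occupancy d = moveDollar T i j, ∑ k with d k = i, G d := by
  rw [sum_sigma', sum_sigma']
  refine sum_nbij' (fun x => ⟨Function.update x.1 x.2 i, x.2⟩)
    (fun y => ⟨Function.update y.1 y.2 j, y.2⟩) ?_ ?_ ?_ ?_ fun _ _ => rfl
  · rintro ⟨d, k⟩ h
    simp only [mem_sigma, mem_filter, mem_univ, true_and] at h ⊢
    exact ⟨by rw [occupancy_update h.2 hij, h.1], by simp⟩
  · rintro ⟨d, k⟩ h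
    simp only [mem_sigma, mem_filter, mem_univ, true_and] at h ⊢
    exact ⟨by rw [occupancy_update h.2 hij.symm, h.1, moveDollar_moveDollar hij hj], by simp⟩
  · rintro ⟨d, k⟩ h
    simp only [mem_sigma, mem_filter, mem_univ, true_and] at h
    simp [← h.2]
  · rintro ⟨d, k⟩ h
    simp only [mem_sigma, mem_filter, mem_univ, true_and] at h
    simp [← h.2]

lemma sum_sum_update (G : (ι → Fin N) → ℝ) (T : Fin N → ℕ) {i j : Fin N} (hij : i ≠ j) :
    ∑ d with occupancy d = T, ∑ k with d k = j, G (Function.update d k i)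
      = ((T i : ℝ) + 1) * (∑ d with occupancy d = moveDollar T i j, G d)
          * (if 1 ≤ T j then 1 else 0) := by
  split_ifs with hj
  · rw [sum_sum_update_eq_sum_sum G hij hj, mul_one, mul_sum]
    refine sum_congr rfl fun d hd => ?_
    have hi : #{k | d k = i} = T i + 1 := by
      rw [← moveDollar_apply_left hij, ← (mem_filter.mp hd).2]
      rfl
    rw [sum_const, nsmul_eq_mul, hi]
    push_cast
    ring
  · rw [mul_zero]
    refine sum_eq_zero fun d hd => ?_
    have hj' : occupancy d j = 0 := by rw [(mem_filter.mp hd).2]; omega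
    rw [occupancy, card_eq_zero] at hj'
    rw [hj', sum_empty]

lemma sum_sum_sum_erase_update (G : (ι → Fin N) → ℝ) (T : Fin N → ℕ) :
    ∑ d with occupancy d = T, ∑ k, ∑ b ∈ univ.erase (d k), G (Function.update d k b)
      = ∑ i, ∑ j, if i ≠ j then
          ((T i : ℝ) + 1) * (∑ d with occupancy d = moveDollar T i j, G d)
            * (if 1 ≤ T j then 1 else 0) else 0 := by
  have hd : ∀ d : ι → Fin N, ∑ k, ∑ b ∈ univ.erase (d k), G (Function.update d k b)
      = ∑ i, ∑ j, if i ≠ j then ∑ k with d k = j, G (Function.update d k i) else 0 := by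
    intro d
    calc ∑ k, ∑ b ∈ univ.erase (d k), G (Function.update d k b)
        = ∑ j, ∑ k with d k = j, ∑ i ∈ univ.erase j, G (Function.update d k i) := by
          rw [← sum_fiberwise univ d]
          exact sum_congr rfl fun j _ => sum_congr rfl fun k hk => by rw [(mem_filter.mp hk).2]
      _ = ∑ j, ∑ i, if i ≠ j then ∑ k with d k = j, G (Function.update d k i) else 0 :=
          sum_congr rfl fun j _ => by rw [sum_comm, ← filter_ne', sum_filter]
      _ = _ := sum_comm
  simp only [hd]
  rw [sum_comm]
  refine sum_congr rfl fun i _ => ?_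
  rw [sum_comm]
  refine sum_congr rfl fun j _ => ?_
  by_cases hij : i = j
  · simp [hij]
  · simp only [ne_eq, hij, not_false_eq_true, if_true]
    exact sum_sum_update G T hij

theorem hasDerivAt_dollarLaw (hN : N ≠ 0) (t : ℝ) (T : Fin N → ℕ) :
    HasDerivAt (dollarLaw σ · T) (masterOp (dollarLaw σ t) T) t := by
  refine (HasDerivAt.fun_sum fun d _ => hasDerivAt_dollarWeight σ hN t d).congr_deriv ?_
  have hcard : (Fintype.card ι : ℝ) * dollarLaw σ t T = (∑ i, (T i : ℝ)) * dollarLaw σ t T := by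
    by_cases hT : ∑ i, T i = Fintype.card ι
    · rw [← hT]
      push_cast
      rfl
    · simp [dollarLaw, filter_occupancy_eq_eq_empty hT]
  have hjump : ∑ d with occupancy d = T, ∑ k, ∑ b ∈ univ.erase (d k),
      dollarWeight σ t (Function.update d k b)
      = ∑ i, ∑ j, if i ≠ j then
          ((T i : ℝ) + 1) * dollarLaw σ t (moveDollar T i j) * (if 1 ≤ T j then 1 else 0)
          else 0 :=
    sum_sum_sum_erase_update _ T
  rw [masterOp_apply_eq, mul_assoc, ← hcard, ← hjump]
  simp only [dollarLaw, ← sum_div, sum_sub_distrib, ← mul_sum, sum_const, card_univ,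
    nsmul_eq_mul]

end DollarProcess

section Identification

variable {P : ℝ → Measure (Fin N → ℕ)} {L : Finset (Fin N → ℕ)}

lemma sum_toReal_measure_singleton (P₀ : Measure (Fin N → ℕ)) [IsProbabilityMeasure P₀]
    (hL : P₀ (↑L)ᶜ = 0) : ∑ S ∈ L, (P₀ {S}).toReal = 1 := by
  rw [← ENNReal.toReal_sum fun S _ => measure_ne_top P₀ {S}, sum_measure_singleton,
    (prob_compl_eq_zero_iff L.measurableSet).mp hL, ENNReal.toReal_one]

theorem toReal_measure_singleton_eq_sum (hN : N ≠ 0) (hP : IsMasterSolution P)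
    (hL : P 0 (↑L)ᶜ = 0) {t : ℝ} (ht : 0 ≤ t) (T : Fin N → ℕ) :
    (P t {T}).toReal
      = ∑ S ∈ L, (P 0 {S}).toReal * dollarLaw (Sigma.fst : Dollars S → Fin N) t T := by
  have hmix : SolvesMaster fun t T =>
      ∑ S ∈ L, (P 0 {S}).toReal * dollarLaw (Sigma.fst : Dollars S → Fin N) t T := by
    intro T t _
    refine (HasDerivAt.fun_sum fun S _ => ((hasDerivAt_dollarLaw _ hN t T).const_mul
      (P 0 {S}).toReal)).hasDerivWithinAt.congr_deriv ?_
    have hlin : (fun T => ∑ S ∈ L, (P 0 {S}).toReal * dollarLaw (Sigma.fst : Dollars S → Fin N) t T)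
        = ∑ S ∈ L, (P 0 {S}).toReal • dollarLaw (Sigma.fst : Dollars S → Fin N) t := by
      funext T
      simp [Finset.sum_apply]
    simp [hlin, map_sum, Finset.sum_apply]
  have h₀ : (fun T => (P 0 {T}).toReal)
      = fun T => ∑ S ∈ L, (P 0 {S}).toReal * dollarLaw (Sigma.fst : Dollars S → Fin N) 0 T := by
    funext T
    simp only [dollarLaw_zero, occupancy_sigma_fst, mul_ite, mul_one, mul_zero, sum_ite_eq']
    split_ifs with hT
    · rfl
    · rw [measure_mono_null (Set.singleton_subset_iff.mpr hT) hL, ENNReal.toReal_zero]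
  exact congrFun ((solvesMaster_of_isMasterSolution hP).eqOn hmix h₀ ht) T

end Identification

section Coupling

-- The agent `c` is uniform, and `b` is `a` with probability `e^{-t}` and `c` otherwise.
def couplingKernel (N : ℕ) (t : ℝ) (a b c : Fin N) : ℝ :=
  (Real.exp (-t) * (if a = b then 1 else 0) + (1 - Real.exp (-t)) * (if b = c then 1 else 0)) / N

lemma couplingKernel_nonneg {t : ℝ} (ht : 0 ≤ t) (a b c : Fin N) :
    0 ≤ couplingKernel N t a b c :=
  div_nonneg (add_nonneg (by positivity)
    (mul_nonneg (one_sub_exp_neg_nonneg ht) (by positivity))) (Nat.cast_nonneg N)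

lemma sum_couplingKernel_snd (hN : N ≠ 0) (t : ℝ) (a b : Fin N) :
    ∑ c, couplingKernel N t a b c = dollarKernel N t a b := by
  simp only [couplingKernel, dollarKernel, ← sum_div, sum_add_distrib, ← mul_sum, sum_ite_eq,
    mem_univ, if_true, Finset.sum_const, Finset.card_univ, Fintype.card_fin, nsmul_eq_mul,
    mul_one]
  field_simp

lemma sum_couplingKernel_fst (t : ℝ) (a c : Fin N) :
    ∑ b, couplingKernel N t a b c = 1 / N := by
  simp only [couplingKernel, ← sum_div, sum_add_distrib, ← mul_sum, sum_ite_eq, sum_ite_eq',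
    mem_univ, if_true]
  ring

lemma sum_couplingKernel (hN : N ≠ 0) (t : ℝ) (a : Fin N) :
    ∑ bc : Fin N × Fin N, couplingKernel N t a bc.1 bc.2 = 1 := by
  rw [Fintype.sum_prod_type']
  simp only [sum_couplingKernel_snd hN, sum_dollarKernel hN]

lemma sum_couplingKernel_ne_le (hN : N ≠ 0) (a : Fin N) (t : ℝ) :
    ∑ bc : Fin N × Fin N with bc.1 ≠ bc.2, couplingKernel N t a bc.1 bc.2 ≤ Real.exp (-t) :=
  calc ∑ bc : Fin N × Fin N with bc.1 ≠ bc.2, couplingKernel N t a bc.1 bc.2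
      = ∑ bc : Fin N × Fin N with bc.1 ≠ bc.2, Real.exp (-t) * (if a = bc.1 then 1 else 0) / N :=
        sum_congr rfl fun bc hbc => by simp [couplingKernel, (mem_filter.mp hbc).2]
    _ ≤ ∑ bc : Fin N × Fin N, Real.exp (-t) * (if a = bc.1 then 1 else 0) / N :=
        sum_le_sum_of_subset_of_nonneg (subset_univ _) fun _ _ _ => by positivity
    _ = Real.exp (-t) := by
        refine (Fintype.sum_prod_type' fun b (_ : Fin N) =>
          Real.exp (-t) * (if a = b then 1 else 0) / N).trans ?_
        simp only [Finset.sum_const, Finset.card_univ, Fintype.card_fin, nsmul_eq_mul, ← sum_div,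
          ← mul_sum, sum_ite_eq, mem_univ, if_true]
        field_simp

variable {ι : Type*} [Fintype ι]

lemma transportCost_le (hN : N ≠ 0) (b c : ι → Fin N) :
    (∑ j, (Nat.dist (occupancy b j) (occupancy c j) : ℝ≥0∞)) / N
      ≤ ENNReal.ofReal (2 * #{k | b k ≠ c k} / N) := by
  rw [ENNReal.ofReal_div_of_pos (by positivity), ofReal_natCast]
  gcongr
  simp_rw [← ofReal_natCast, ← ofReal_sum_of_nonneg fun j _ => Nat.cast_nonneg _]
  exact ofReal_le_ofReal (sum_dist_occupancy_le b c)

variable [DecidableEq ι]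

lemma sum_prod_couplingKernel_mul_card_ne_le (hN : N ≠ 0) (σ : ι → Fin N) (t : ℝ) :
    ∑ d : ι → Fin N × Fin N,
        (∏ k, couplingKernel N t (σ k) (d k).1 (d k).2) * #{k | (d k).1 ≠ (d k).2}
      ≤ Fintype.card ι * Real.exp (-t) := by
  rw [sum_prod_mul_card_filter (fun k (bc : Fin N × Fin N) => couplingKernel N t (σ k) bc.1 bc.2)
    (fun k => sum_couplingKernel hN t (σ k)) fun bc : Fin N × Fin N => bc.1 ≠ bc.2]
  simpa using sum_le_sum fun k (_ : k ∈ univ) => sum_couplingKernel_ne_le hN (σ k) t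

lemma MNmeas_singleton (μ : ℕ) (T : Fin N → ℕ) :
    MNmeas N μ {T} = if ∑ i, T i = N * μ then
      ENNReal.ofReal (((N * μ).factorial : ℝ) / ((∏ i, (T i).factorial : ℕ) * (N : ℝ) ^ (N * μ)))
      else 0 := by
  rw [MNmeas, Measure.sum_apply _ (measurableSet_singleton T),
    tsum_eq_single T fun S hS => by split_ifs <;> simp [hS]]
  split_ifs <;> simp

lemma toReal_MNmeas_singleton {μ : ℕ} (hN : N ≠ 0) (hι : Fintype.card ι = N * μ)
    (T : Fin N → ℕ) :
    (MNmeas N μ {T}).toReal = #{c : ι → Fin N | occupancy c = T} / (N : ℝ) ^ (N * μ) := by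
  rw [MNmeas_singleton]
  split_ifs with hT
  · have hcount := card_occupancy_eq_mul_prod_factorial (ι := ι) (hT.trans hι.symm)
    rw [hι] at hcount
    rw [ENNReal.toReal_ofReal (by positivity), ← hcount]
    push_cast
    field_simp
  · rw [filter_occupancy_eq_eq_empty (hι ▸ hT)]
    simp

def couplingWeight (P₀ : Measure (Fin N → ℕ)) (t : ℝ)
    (x : Σ S : Fin N → ℕ, Dollars S → Fin N × Fin N) : ℝ :=
  (P₀ {x.1}).toReal * ∏ k, couplingKernel N t k.1 (x.2 k).1 (x.2 k).2

lemma couplingWeight_nonneg (P₀ : Measure (Fin N → ℕ)) {t : ℝ} (ht : 0 ≤ t)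
    (x : Σ S : Fin N → ℕ, Dollars S → Fin N × Fin N) : 0 ≤ couplingWeight P₀ t x :=
  mul_nonneg ENNReal.toReal_nonneg (prod_nonneg fun _ _ => couplingKernel_nonneg ht _ _ _)

abbrev couplingIndex (L : Finset (Fin N → ℕ)) :
    Finset (Σ S : Fin N → ℕ, Dollars S → Fin N × Fin N) :=
  L.sigma fun _ => univ

def coupling (P₀ : Measure (Fin N → ℕ)) (L : Finset (Fin N → ℕ)) (t : ℝ) :
    Measure ((Fin N → ℕ) × (Fin N → ℕ)) :=
  diracMixture (couplingIndex L) (couplingWeight P₀ t)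
    fun x => (occupancy fun k => (x.2 k).1, occupancy fun k => (x.2 k).2)

theorem map_fst_coupling (hN : N ≠ 0) {P : ℝ → Measure (Fin N → ℕ)} (hP : IsMasterSolution P)
    {L : Finset (Fin N → ℕ)} (hL : P 0 (↑L)ᶜ = 0) {t : ℝ} (ht : 0 ≤ t) :
    (coupling (P 0) L t).map Prod.fst = P t := by
  have := hP.1 t ht
  refine Measure.ext_of_singleton fun T => ?_
  rw [coupling, map_diracMixture_apply_singleton (fun x _ => couplingWeight_nonneg _ ht x) _
    measurable_fst, sum_sigma, ← ofReal_toReal (measure_ne_top (P t) {T}),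
    toReal_measure_singleton_eq_sum hN hP hL ht T]
  congr 1
  refine sum_congr rfl fun S _ => ?_
  have h := sum_prod_mul_comp_fst
    (fun (k : Dollars S) (bc : Fin N × Fin N) => couplingKernel N t k.1 bc.1 bc.2)
    fun b => if occupancy b = T then (1 : ℝ) else 0
  simp only [sum_couplingKernel_snd hN, mul_boole] at h
  rw [dollarLaw, sum_filter]
  simp only [dollarWeight]
  rw [← h, mul_sum]
  refine sum_congr rfl fun d _ => ?_
  simp only [couplingWeight, mul_ite, mul_zero]

lemma card_dollars_of_mem {μ : ℕ} {L : Finset (Fin N → ℕ)} (hL : ∀ S ∈ L, ∑ i, S i = N * μ)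
    {S : Fin N → ℕ} (hS : S ∈ L) : Fintype.card (Dollars S) = N * μ :=
  (card_dollars S).trans (hL S hS)

theorem map_snd_coupling (hN : N ≠ 0) {μ : ℕ} (P₀ : Measure (Fin N → ℕ)) [IsProbabilityMeasure P₀]
    {L : Finset (Fin N → ℕ)} (hP₀ : P₀ (↑L)ᶜ = 0) (hL : ∀ S ∈ L, ∑ i, S i = N * μ) {t : ℝ}
    (ht : 0 ≤ t) : (coupling P₀ L t).map Prod.snd = MNmeas N μ := by
  refine Measure.ext_of_singleton fun T => ?_
  have hfin : MNmeas N μ {T} ≠ ⊤ := by rw [MNmeas_singleton]; split_ifs <;> simp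
  rw [coupling, map_diracMixture_apply_singleton (fun x _ => couplingWeight_nonneg _ ht x) _
    measurable_snd, sum_sigma, ← ofReal_toReal hfin, ← one_mul (MNmeas N μ {T}).toReal,
    ← sum_toReal_measure_singleton P₀ hP₀, sum_mul]
  congr 1
  refine sum_congr rfl fun S hS => ?_
  have h := sum_prod_mul_comp_snd
    (fun (k : Dollars S) (bc : Fin N × Fin N) => couplingKernel N t k.1 bc.1 bc.2)
    fun c => if occupancy c = T then (1 : ℝ) else 0
  simp only [sum_couplingKernel_fst, prod_const, card_univ, mul_boole] at h
  rw [toReal_MNmeas_singleton hN (card_dollars_of_mem hL hS), ← card_dollars_of_mem hL hS,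
    div_eq_mul_one_div, ← one_div_pow, ← nsmul_eq_mul, ← sum_const, sum_filter, ← h, mul_sum]
  refine sum_congr rfl fun d _ => ?_
  simp only [couplingWeight, mul_ite, mul_zero]

lemma sum_couplingWeight_mul_card_ne_le (hN : N ≠ 0) {μ : ℕ} (P₀ : Measure (Fin N → ℕ))
    [IsProbabilityMeasure P₀] {L : Finset (Fin N → ℕ)} (hP₀ : P₀ (↑L)ᶜ = 0)
    (hL : ∀ S ∈ L, ∑ i, S i = N * μ) (t : ℝ) :
    ∑ x ∈ couplingIndex L, couplingWeight P₀ t x * (2 * #{k | (x.2 k).1 ≠ (x.2 k).2} / N)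
      ≤ 2 * μ * Real.exp (-t) := by
  have hmismatch : ∀ S ∈ L, 2 / N * ∑ d : Dollars S → Fin N × Fin N,
      (∏ k, couplingKernel N t k.1 (d k).1 (d k).2) * #{k | (d k).1 ≠ (d k).2}
        ≤ 2 * μ * Real.exp (-t) := fun S hS =>
    calc _ ≤ 2 / N * (Fintype.card (Dollars S) * Real.exp (-t)) :=
          mul_le_mul_of_nonneg_left (sum_prod_couplingKernel_mul_card_ne_le hN _ t)
            (by positivity)
      _ = 2 * μ * Real.exp (-t) := by
          rw [card_dollars_of_mem hL hS]
          push_cast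
          field_simp
  rw [sum_sigma]
  calc _ = ∑ S ∈ L, (P₀ {S}).toReal * (2 / N * ∑ d : Dollars S → Fin N × Fin N,
        (∏ k, couplingKernel N t k.1 (d k).1 (d k).2) * #{k | (d k).1 ≠ (d k).2}) := by
        refine sum_congr rfl fun S _ => ?_
        simp only [couplingWeight, mul_sum]
        exact sum_congr rfl fun d _ => by ring
    _ ≤ ∑ S ∈ L, (P₀ {S}).toReal * (2 * μ * Real.exp (-t)) :=
        sum_le_sum fun S hS => mul_le_mul_of_nonneg_left (hmismatch S hS) toReal_nonneg
    _ = 2 * μ * Real.exp (-t) := by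
        rw [← sum_mul, sum_toReal_measure_singleton P₀ hP₀, one_mul]

theorem lintegral_cost_coupling_le (hN : N ≠ 0) {μ : ℕ} (P₀ : Measure (Fin N → ℕ))
    [IsProbabilityMeasure P₀] {L : Finset (Fin N → ℕ)} (hP₀ : P₀ (↑L)ᶜ = 0)
    (hL : ∀ S ∈ L, ∑ i, S i = N * μ) {t : ℝ} (ht : 0 ≤ t) :
    ∫⁻ z, (∑ j : Fin N, (Nat.dist (z.1 j) (z.2 j) : ℝ≥0∞)) / (N : ℝ≥0∞) ∂coupling P₀ L t
      ≤ ENNReal.ofReal (2 * μ * Real.exp (-t)) := by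
  rw [coupling, lintegral_diracMixture]
  calc _ ≤ ∑ x ∈ couplingIndex L, ENNReal.ofReal (couplingWeight P₀ t x)
          * ENNReal.ofReal (2 * #{k | (x.2 k).1 ≠ (x.2 k).2} / N) :=
        sum_le_sum fun x _ => mul_le_mul_right (transportCost_le hN _ _) _
    _ = ENNReal.ofReal (∑ x ∈ couplingIndex L,
          couplingWeight P₀ t x * (2 * #{k | (x.2 k).1 ≠ (x.2 k).2} / N)) := by
        rw [ofReal_sum_of_nonneg fun x _ => mul_nonneg (couplingWeight_nonneg _ ht x)
          (by positivity)]
        exact sum_congr rfl fun x _ => (ofReal_mul (couplingWeight_nonneg _ ht x)).symm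
    _ ≤ ENNReal.ofReal (2 * μ * Real.exp (-t)) :=
        ofReal_le_ofReal (sum_couplingWeight_mul_card_ne_le hN P₀ hP₀ hL t)

end Coupling

end PoorBiased

theorem convergence_to_multinomial_general (N μ : ℕ) (hN : 2 ≤ N)
    (P : ℝ → Measure (Fin N → ℕ)) (hP : IsMasterSolution P)
    (hP0 : P 0 ({S : Fin N → ℕ | ∑ i, S i = N * μ}ᶜ) = 0) :
    ∀ t ∈ Set.Ici (0 : ℝ),
      W1 N (P t) (MNmeas N μ) ≤ ENNReal.ofReal (2 * μ * Real.exp (-t)) := by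
  intro t ht
  have hN₀ : N ≠ 0 := by omega
  have := hP.1 0 Set.self_mem_Ici
  let L := piAntidiag (univ : Finset (Fin N)) (N * μ)
  have hL : ∀ S ∈ L, ∑ i, S i = N * μ := fun S hS => (mem_piAntidiag.mp hS).1
  have hPL : P 0 (↑L)ᶜ = 0 := by
    convert hP0 using 3
    ext S
    simp [L]
  exact iInf_le_of_le (PoorBiased.coupling (P 0) L t) <|
    iInf_le_of_le (PoorBiased.map_fst_coupling hN₀ hP hPL ht) <|
    iInf_le_of_le (PoorBiased.map_snd_coupling hN₀ (P 0) hPL hL ht) <|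
    PoorBiased.lintegral_cost_coupling_le hN₀ (P 0) hPL hL ht

/-- Equilibration of the poor-biased dynamics towards the multinomial distribution:
if `P_0` is supported on `𝒜_{N,μ}`, then `W₁(P_t, M_N) ≤ 2 μ e^{-t}`. -/
theorem convergence_to_multinomial (N μ : ℕ) (hN : 2 ≤ N) (hμ : 1 ≤ μ)
    (P : ℝ → Measure (Fin N → ℕ)) (hP : IsMasterSolution P)
    (hP0 : P 0 ({S : Fin N → ℕ | ∑ i, S i = N * μ}ᶜ) = 0) :
    ∀ t ∈ Set.Ici (0 : ℝ),
      W1 N (P t) (MNmeas N μ) ≤ ENNReal.ofReal (2 * μ * Real.exp (-t)) :=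
  convergence_to_multinomial_general N μ hN P hP hP0

end
end

section
/- For every integer m ≥ 1, the mean absolute deviation of a Poisson random variable Z with mean m about m is given exactly by E[|Z − m|] = 2·e^{−m}·m^{m+1}/m!; equivalently, ∑_{n=0}^∞ |n − m|·e^{−m}·mⁿ/n! = 2·e^{−m}·m^{m+1}/m!. -/
/-!
Split `|n - m| = (n - m) + 2 (m - n)⁺`. Against the weights `mⁿ / n!` the first part sums to `0`,
because `∑ n xⁿ / n! = x eˣ`. The second part is supported on `n ≤ m`, where it telescopes:
`(x - i) xⁱ / i! = x^(i+1) / i! - xⁱ / (i-1)!`, so `∑_{i ≤ m} (m - i) mⁱ / i! = m^(m+1) / m!`.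
-/

open Finset Nat

theorem sum_range_succ_sub_mul_pow_div_factorial (x : ℝ) (k : ℕ) :
    ∑ i ∈ range (k + 1), (x - i) * x ^ i / i ! = x ^ (k + 1) / k ! := by
  induction k with
  | zero => simp
  | succ k ih =>
    rw [sum_range_succ, ih, factorial_succ]
    push_cast
    field_simp
    ring

theorem Real.hasSum_pow_div_factorial (x : ℝ) :
    HasSum (fun n : ℕ ↦ x ^ n / n !) (Real.exp x) := by
  rw [Real.exp_eq_exp_ℝ]
  exact NormedSpace.expSeries_div_hasSum_exp x

theorem hasSum_natCast_mul_pow_div_factorial (x : ℝ) :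
    HasSum (fun n : ℕ ↦ n * x ^ n / n !) (x * Real.exp x) := by
  rw [← hasSum_nat_add_iff' 1, sum_range_one, CharP.cast_eq_zero, zero_mul, zero_div, sub_zero]
  refine ((Real.hasSum_pow_div_factorial x).mul_left x).congr_fun fun n ↦ ?_
  rw [factorial_succ]
  push_cast
  field_simp
  ring

theorem hasSum_natCast_sub_mul_pow_div_factorial (x : ℝ) :
    HasSum (fun n : ℕ ↦ (n - x) * x ^ n / n !) 0 := by
  have h := (hasSum_natCast_mul_pow_div_factorial x).sub
    ((Real.hasSum_pow_div_factorial x).mul_left x)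
  rw [sub_self] at h
  exact h.congr_fun fun n ↦ by ring

theorem hasSum_abs_natCast_sub_mul_pow_div_factorial (m : ℕ) :
    HasSum (fun n : ℕ ↦ |(n : ℝ) - m| * (m : ℝ) ^ n / n !) (2 * (m : ℝ) ^ (m + 1) / m !) := by
  set g : ℕ → ℝ := fun n ↦ 2 * ((m - n : ℕ) : ℝ) * (m : ℝ) ^ n / (n ! : ℝ)
  have hg : ∑ n ∈ range (m + 1), g n = 2 * (m : ℝ) ^ (m + 1) / m ! := by
    rw [mul_div_assoc, ← sum_range_succ_sub_mul_pow_div_factorial, mul_sum]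
    refine sum_congr rfl fun n hn ↦ ?_
    simp only [g, Nat.cast_sub (Nat.lt_succ_iff.mp (mem_range.mp hn))]
    ring
  have hsum : HasSum g (2 * (m : ℝ) ^ (m + 1) / m !) := by
    refine hg ▸ hasSum_sum_of_ne_finset_zero fun n hn ↦ ?_
    simp [g, Nat.sub_eq_zero_of_le (Nat.le_of_succ_le (not_lt.mp (mem_range.not.mp hn)))]
  have h := (hasSum_natCast_sub_mul_pow_div_factorial (m : ℝ)).add hsum
  rw [zero_add] at h
  refine h.congr_fun fun n ↦ ?_
  rcases le_total n m with hnm | hmn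
  · rw [abs_of_nonpos (sub_nonpos.mpr (Nat.cast_le.mpr hnm))]
    simp only [g, Nat.cast_sub hnm]
    ring
  · rw [abs_of_nonneg (sub_nonneg.mpr (Nat.cast_le.mpr hmn))]
    simp [g, Nat.sub_eq_zero_of_le hmn]

theorem poisson_mean_absolute_deviation_general (m : ℕ) :
    ∑' n : ℕ, |(n : ℝ) - (m : ℝ)| * Real.exp (-(m : ℝ)) * (m : ℝ) ^ n / n.factorial
      = 2 * Real.exp (-(m : ℝ)) * (m : ℝ) ^ (m + 1) / (m.factorial : ℝ) := by
  have h := (hasSum_abs_natCast_sub_mul_pow_div_factorial m).mul_left (Real.exp (-(m : ℝ)))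
  exact (h.congr_fun fun n ↦ by ring).tsum_eq.trans (by ring)

/-- The mean absolute deviation of a Poisson random variable with integer mean `m`:
`∑_{n=0}^∞ |n - m| e^{-m} m^n / n! = 2 e^{-m} m^{m+1} / m!`. -/
theorem poisson_mean_absolute_deviation (m : ℕ) (hm : 1 ≤ m) :
    ∑' n : ℕ, |(n : ℝ) - (m : ℝ)| * Real.exp (-(m : ℝ)) * (m : ℝ) ^ n / n.factorial
      = 2 * Real.exp (-(m : ℝ)) * (m : ℝ) ^ (m + 1) / (m.factorial : ℝ) :=
  poisson_mean_absolute_deviation_general m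
end
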